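/- arXiv:2107.05582 — 4 statements merged into one kernel-verified Lean document; each statement's English description precedes it below -/
import Mathlib

section
/- Let S be a finite set of nonzero points spanning R^d, c : S → R_{>0} a weight function with (1/|S|) Σ_{x∈S} c(x)^2 x x^T = A^{-2} for an invertible symmetric positive definite A, and suppose c(x)^2 ≤ (d+δ)/||Ax||_2^2 for all x ∈ S. Then (1/|S|) Σ_{x∈S} (Ax/||Ax||_2)(Ax/||Ax||_2)^T ⪰ (1/(d+δ)) I_d. -/
/-!
Conjugating the hypothesis `(A * A)⁻¹ = |S|⁻¹ ∑ c(x)² x xᵀ` by the symmetric matrix `A` gives the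
resolution of the identity `1 = |S|⁻¹ ∑ c(x)² (Ax)(Ax)ᵀ`. The bound on `c` says that each weight
`(d + δ)⁻¹ c(x)²` is at most `‖Ax‖⁻²`, so the difference in the conclusion is a nonnegative
combination of the rank-one matrices `(Ax)(Ax)ᵀ`.
-/

open Matrix

namespace Matrix

variable {m n ι α : Type*}

theorem mul_vecMulVec_mul_transpose [CommSemiring α] [Fintype n] (A : Matrix m n α)
    (x y : n → α) : A * vecMulVec x y * Aᵀ = vecMulVec (A *ᵥ x) (A *ᵥ y) := by
  rw [mul_vecMulVec, vecMulVec_mul, vecMul_transpose]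

theorem mul_inv_mul_self_mul [CommRing α] [Fintype n] [DecidableEq n] {A : Matrix n n α}
    (hA : IsUnit A.det) : A * (A * A)⁻¹ * A = 1 := by
  rw [mul_inv_rev, Matrix.mul_assoc, Matrix.mul_assoc, nonsing_inv_mul _ hA, Matrix.mul_one,
    mul_nonsing_inv _ hA]

theorem sum_smul_vecMulVec_mulVec_eq_one [CommRing α] [Fintype n] [DecidableEq n]
    {A : Matrix n n α} (hAT : Aᵀ = A) (hA : IsUnit A.det) {s : Finset ι} {a : ι → α}
    {x : ι → n → α} (h : (A * A)⁻¹ = ∑ i ∈ s, a i • vecMulVec (x i) (x i)) :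
    ∑ i ∈ s, a i • vecMulVec (A *ᵥ x i) (A *ᵥ x i) = 1 := by
  calc ∑ i ∈ s, a i • vecMulVec (A *ᵥ x i) (A *ᵥ x i)
      = A * (∑ i ∈ s, a i • vecMulVec (x i) (x i)) * Aᵀ := by
        simp only [Finset.mul_sum, Finset.sum_mul, Matrix.mul_smul, Matrix.smul_mul,
          mul_vecMulVec_mul_transpose]
    _ = 1 := by rw [← h, hAT, mul_inv_mul_self_mul hA]

theorem posSemidef_sum_smul_vecMulVec_self [Fintype n] (s : Finset ι) {a : ι → ℝ}
    (ha : ∀ i ∈ s, 0 ≤ a i) (u : ι → n → ℝ) :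
    (∑ i ∈ s, a i • vecMulVec (u i) (u i)).PosSemidef :=
  posSemidef_sum s fun i hi => by
    simpa using (posSemidef_vecMulVec_self_star (u i)).smul (ha i hi)

end Matrix

theorem inv_mul_le_inv_of_le_div {α : Type*} [Field α] [LinearOrder α] [IsStrictOrderedRing α]
    {a b c : α} (ha : 0 ≤ a) (hb : 0 ≤ b) (h : c ≤ a / b) : a⁻¹ * c ≤ b⁻¹ :=
  calc a⁻¹ * c ≤ a⁻¹ * (a / b) := mul_le_mul_of_nonneg_left h (inv_nonneg.2 ha)
    _ = (a⁻¹ * a) * b⁻¹ := by ring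
    _ ≤ 1 * b⁻¹ := mul_le_mul_of_nonneg_right inv_mul_le_one (inv_nonneg.2 hb)
    _ = b⁻¹ := one_mul _

theorem stmt_4_general {d : ℕ} (S : Finset (Fin d → ℝ))
    (c : (Fin d → ℝ) → ℝ) (δ : ℝ) (hδ : 0 ≤ δ)
    (A : Matrix (Fin d) (Fin d) ℝ) (hApd : A.PosDef)
    (hA2 : (A * A)⁻¹ = (S.card : ℝ)⁻¹ • ∑ x ∈ S, (c x) ^ 2 • Matrix.vecMulVec x x)
    (hcb : ∀ x ∈ S, (c x) ^ 2 ≤ (d + δ) / (A.mulVec x ⬝ᵥ A.mulVec x)) :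
    ((S.card : ℝ)⁻¹ • ∑ x ∈ S, (A.mulVec x ⬝ᵥ A.mulVec x)⁻¹ •
        Matrix.vecMulVec (A.mulVec x) (A.mulVec x)
      - ((d + δ : ℝ)⁻¹) • (1 : Matrix (Fin d) (Fin d) ℝ)).PosSemidef := by
  have hAT : Aᵀ = A := hApd.isHermitian
  have hI : ∑ x ∈ S, ((S.card : ℝ)⁻¹ * c x ^ 2) • vecMulVec (A *ᵥ x) (A *ᵥ x) = 1 :=
    sum_smul_vecMulVec_mulVec_eq_one hAT hApd.det_pos.ne'.isUnit
      (by simp only [hA2, Finset.smul_sum, smul_smul])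
  have hweight : ∀ x ∈ S, (d + δ)⁻¹ * c x ^ 2 ≤ (A *ᵥ x ⬝ᵥ A *ᵥ x)⁻¹ := fun x hx =>
    inv_mul_le_inv_of_le_div (by positivity) (by simpa using dotProduct_self_star_nonneg (A *ᵥ x))
      (hcb x hx)
  convert posSemidef_sum_smul_vecMulVec_self S (a := fun x =>
      (S.card : ℝ)⁻¹ * ((A *ᵥ x ⬝ᵥ A *ᵥ x)⁻¹ - (d + δ)⁻¹ * c x ^ 2))
    (fun x hx => mul_nonneg (by positivity) (sub_nonneg.2 (hweight x hx))) (A *ᵥ ·) using 1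
  rw [← hI]
  simp only [Finset.smul_sum, smul_smul, ← Finset.sum_sub_distrib, ← sub_smul]
  congr! 2
  ring

/-- Let `S` be a finite set of nonzero points spanning `ℝ^d`,
`c : S → ℝ_{>0}` with `(1/|S|) Σ_{x∈S} c(x)² x xᵀ = A⁻²` for a symmetric positive
definite `A`, and suppose `c(x)² ≤ (d+δ)/‖Ax‖²` for all `x ∈ S`. Then
`(1/|S|) Σ_{x∈S} f_A(x) f_A(x)ᵀ ⪰ (1/(d+δ)) I`, where `f_A(x) = Ax/‖Ax‖`. -/
theorem stmt_4 {d : ℕ} (hd : 0 < d) (S : Finset (Fin d → ℝ)) (hS : S.Nonempty)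
    (hS0 : ∀ x ∈ S, x ≠ 0)
    (hspan : Submodule.span ℝ (S : Set (Fin d → ℝ)) = ⊤)
    (c : (Fin d → ℝ) → ℝ) (hc : ∀ x ∈ S, 0 < c x) (δ : ℝ) (hδ : 0 ≤ δ)
    (A : Matrix (Fin d) (Fin d) ℝ) (hApd : A.PosDef)
    (hA2 : (A * A)⁻¹ = (S.card : ℝ)⁻¹ • ∑ x ∈ S, (c x) ^ 2 • Matrix.vecMulVec x x)
    (hcb : ∀ x ∈ S, (c x) ^ 2 ≤ (d + δ) / (A.mulVec x ⬝ᵥ A.mulVec x)) :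
    ((S.card : ℝ)⁻¹ • ∑ x ∈ S, (A.mulVec x ⬝ᵥ A.mulVec x)⁻¹ •
        Matrix.vecMulVec (A.mulVec x) (A.mulVec x)
      - ((d + δ : ℝ)⁻¹) • (1 : Matrix (Fin d) (Fin d) ℝ)).PosSemidef :=
  stmt_4_general S c δ hδ A hApd hA2 hcb
end

section
/- Let S be a finite multiset of nonzero points in R^d, and suppose a subspace W of dimension k contains strictly more than a k/d fraction of the points of S. Then for every invertible linear map A : R^d → R^d, the matrix M_A = (1/|S|) Σ_{x∈S} f_A(x) f_A(x)^T (where f_A(x) = Ax/||Ax||_2) has smallest eigenvalue strictly less than 1/d. -/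
/-! Put `U = A W` and let `u₁, …, u_{d-k}` be an orthonormal basis of `Uᗮ`. By Bessel's inequality
`∑ᵢ ⟪f_A x, uᵢ⟫² ≤ 1` for every `x`, and the sum vanishes when `x ∈ W`, so
`∑ᵢ uᵢᵀ M_A uᵢ ≤ #{x ∈ S | x ∉ W} / |S| < (d - k) / d`. Hence some `uᵢ` has `uᵢᵀ M_A uᵢ < 1 / d`. -/

open Matrix Module RealInnerProductSpace
open scoped Classical

section

variable {E : Type*} [NormedAddCommGroup E] [InnerProductSpace ℝ E]

theorem Orthonormal.sum_inv_norm_sq_mul_inner_sq_le_one {ι : Type*} {b : ι → E}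
    (hb : Orthonormal ℝ b) (s : Finset ι) (y : E) :
    ∑ i ∈ s, (‖y‖ ^ 2)⁻¹ * ⟪y, b i⟫ ^ 2 ≤ 1 := by
  rw [← Finset.mul_sum]
  refine inv_mul_le_one_of_le₀ ?_ (by positivity)
  simpa [real_inner_comm] using hb.sum_inner_products_le (x := y) (s := s)

theorem Orthonormal.sum_sum_map_inv_norm_sq_mul_inner_sq_le {ι : Type*} [Fintype ι] {b : ι → E}
    (hb : Orthonormal ℝ b) {U : Submodule ℝ E} (hbU : ∀ i, b i ∈ Uᗮ) (T : Multiset E) :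
    ∑ i, (T.map fun y => (‖y‖ ^ 2)⁻¹ * ⟪y, b i⟫ ^ 2).sum ≤ (T.filter (· ∉ U)).card := by
  rw [← Multiset.sum_map_sum]
  conv_lhs => rw [← Multiset.filter_add_not (· ∈ U) T, Multiset.map_add, Multiset.sum_add]
  calc _ ≤ ((T.filter (· ∈ U)).map fun _ => (0 : ℝ)).sum
        + ((T.filter (· ∉ U)).map fun _ => 1).sum := by
        refine add_le_add (Multiset.sum_map_le_sum_map _ _ fun y hy => ?_)
          (Multiset.sum_map_le_sum_map _ _ fun y _ => hb.sum_inv_norm_sq_mul_inner_sq_le_one _ y)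
        simp [Submodule.inner_right_of_mem_orthogonal (Multiset.mem_filter.1 hy).2 (hbU _)]
    _ = (T.filter (· ∉ U)).card := by simp

theorem exists_norm_eq_one_sum_map_inv_norm_sq_mul_inner_sq_lt [FiniteDimensional ℝ E]
    (U : Submodule ℝ E) (hU : finrank ℝ U < finrank ℝ E) (T : Multiset E)
    (hT : (finrank ℝ U / finrank ℝ E : ℝ) * T.card < (T.filter (· ∈ U)).card) :
    ∃ u : E, ‖u‖ = 1 ∧ (T.map fun y => (‖y‖ ^ 2)⁻¹ * ⟪y, u⟫ ^ 2).sum < T.card / finrank ℝ E := by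
  set k := finrank ℝ U
  set d := finrank ℝ E
  let b := stdOrthonormalBasis ℝ Uᗮ
  have hb : Orthonormal ℝ fun i => (b i : E) :=
    b.orthonormal.comp_linearIsometry Uᗮ.subtypeₗᵢ
  have hd : (0 : ℝ) < d := by exact_mod_cast hU.pos
  have hdim : (finrank ℝ Uᗮ : ℝ) = d - k := by
    rw [eq_sub_iff_add_eq', ← Nat.cast_add, U.finrank_add_finrank_orthogonal]
  have hcard : ((T.filter (· ∉ U)).card : ℝ) = T.card - (T.filter (· ∈ U)).card := by
    rw [eq_sub_iff_add_eq', ← Nat.cast_add, ← Multiset.card_add, Multiset.filter_add_not]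
  have hsum : ∑ i, (T.map fun y => (‖y‖ ^ 2)⁻¹ * ⟪y, (b i : E)⟫ ^ 2).sum
      < ∑ _i : Fin (finrank ℝ Uᗮ), (T.card / d : ℝ) := calc
    _ ≤ ((T.filter (· ∉ U)).card : ℝ) :=
      hb.sum_sum_map_inv_norm_sq_mul_inner_sq_le (fun i => (b i).2) T
    _ < (d - k) * (T.card / d : ℝ) := by
      rw [hcard, sub_mul, mul_div_cancel₀ _ hd.ne', mul_div_left_comm]
      linarith
    _ = _ := by rw [Finset.sum_const, Finset.card_univ, Fintype.card_fin, nsmul_eq_mul, hdim]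
  obtain ⟨i, -, hi⟩ := Finset.exists_lt_of_sum_lt hsum
  exact ⟨b i, hb.1 i, hi⟩

end

theorem Matrix.dotProduct_sum_map_smul_vecMulVec_self_mulVec {α R n : Type*} [CommRing R]
    [Fintype n] (S : Multiset α) (w : α → R) (a : α → n → R) (v : n → R) :
    v ⬝ᵥ ((S.map fun x => w x • vecMulVec (a x) (a x)).sum *ᵥ v)
      = (S.map fun x => w x * (a x ⬝ᵥ v) ^ 2).sum := by
  induction S using Multiset.induction with
  | empty => simp
  | cons x S ih =>
    simp only [Multiset.map_cons, Multiset.sum_cons, add_mulVec, dotProduct_add, ih, smul_mulVec,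
      vecMulVec_mulVec, op_smul_eq_smul, dotProduct_smul, smul_eq_mul]
    rw [dotProduct_comm v]
    ring

theorem stmt_6_general {d : ℕ} (S : Multiset (Fin d → ℝ)) (hS0 : S ≠ 0)
    (W : Submodule ℝ (Fin d → ℝ)) (k : ℕ) (hk : Module.finrank ℝ W = k) (hkd : k < d)
    (hcount : ((k : ℝ) / d) * S.card < ((S.filter (fun x => x ∈ W)).card : ℝ)) :
    ∀ A : Matrix (Fin d) (Fin d) ℝ, IsUnit A.det →
      ∃ v : Fin d → ℝ, v ⬝ᵥ v = 1 ∧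
        v ⬝ᵥ (((S.card : ℝ)⁻¹ • (S.map (fun x =>
            (A.mulVec x ⬝ᵥ A.mulVec x)⁻¹ •
              Matrix.vecMulVec (A.mulVec x) (A.mulVec x))).sum).mulVec v) < 1 / d := by
  intro A hA
  let e : (Fin d → ℝ) ≃ₗ[ℝ] EuclideanSpace ℝ (Fin d) :=
    (A.toLinearEquiv' (A.invertibleOfIsUnitDet hA)).trans (WithLp.linearEquiv 2 ℝ _).symm
  have he : ∀ x, e x = WithLp.toLp 2 (A *ᵥ x) := fun x => rfl
  have hkU : finrank ℝ (W.map (e : (Fin d → ℝ) →ₗ[ℝ] EuclideanSpace ℝ (Fin d))) = k := by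
    rw [LinearEquiv.finrank_map_eq, hk]
  obtain ⟨u, hu, hlt⟩ := exists_norm_eq_one_sum_map_inv_norm_sq_mul_inner_sq_lt
    (W.map (e : _ →ₗ[ℝ] _)) (by rwa [hkU, finrank_euclideanSpace_fin])
    (S.map e) (by simpa [Multiset.filter_map, Function.comp_def, hkU] using hcount)
  have hS : (0 : ℝ) < S.card := by exact_mod_cast Multiset.card_pos.2 hS0
  have hterm : ∀ x, (‖e x‖ ^ 2)⁻¹ * ⟪e x, u⟫ ^ 2
      = (A *ᵥ x ⬝ᵥ A *ᵥ x)⁻¹ * (A *ᵥ x ⬝ᵥ WithLp.ofLp u) ^ 2 := by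
    intro x
    simp only [← real_inner_self_eq_norm_sq, he, EuclideanSpace.inner_eq_star_dotProduct,
      star_trivial, dotProduct_comm (WithLp.ofLp u)]
  rw [Multiset.map_map, Multiset.card_map] at hlt
  refine ⟨WithLp.ofLp u, ?_, ?_⟩
  · have := real_inner_self_eq_norm_sq u
    rwa [EuclideanSpace.inner_eq_star_dotProduct, star_trivial, hu, one_pow] at this
  · rw [smul_mulVec, dotProduct_smul, dotProduct_sum_map_smul_vecMulVec_self_mulVec, smul_eq_mul]
    calc _ < (S.card : ℝ)⁻¹ * (S.card / d) := by
          gcongr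
          simpa [Function.comp_def, hterm] using hlt
      _ = 1 / d := by field_simp

/-- If a subspace `W` of dimension `k < d` contains strictly more than a
`k/d` fraction of the points of a finite multiset `S` of nonzero points, then for every
invertible `A`, the matrix `M_A = (1/|S|) Σ_{x∈S} f_A(x) f_A(x)ᵀ` has smallest
eigenvalue strictly less than `1/d` (there is a unit vector with quadratic form `< 1/d`). -/
theorem stmt_6 {d : ℕ} (hd : 0 < d) (S : Multiset (Fin d → ℝ)) (hS0 : S ≠ 0)
    (hSnz : ∀ x ∈ S, x ≠ 0)
    (W : Submodule ℝ (Fin d → ℝ)) (k : ℕ) (hk : Module.finrank ℝ W = k) (hkd : k < d)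
    (hcount : ((k : ℝ) / d) * S.card < ((S.filter (fun x => x ∈ W)).card : ℝ)) :
    ∀ A : Matrix (Fin d) (Fin d) ℝ, IsUnit A.det →
      ∃ v : Fin d → ℝ, v ⬝ᵥ v = 1 ∧
        v ⬝ᵥ (((S.card : ℝ)⁻¹ • (S.map (fun x =>
            (A.mulVec x ⬝ᵥ A.mulVec x)⁻¹ •
              Matrix.vecMulVec (A.mulVec x) (A.mulVec x))).sum).mulVec v) < 1 / d :=
  stmt_6_general S hS0 W k hk hkd hcount
end

section
/- Let v_1 ≥ v_2 ≥ ... ≥ v_n ≥ 0 be reals and 1 = i_1 < i_2 < ... < i_k ≤ n be indices, where k divides n. If i_{κ+1} ≤ (n/k)κ + 1 for every κ ∈ {1,...,k−1}, then Σ_{j=1}^k v_{i_j} ≥ (k/n) Σ_{i=1}^n v_i. -/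
open Finset

/-- Cutting `Fin (k * m)` into `k` consecutive blocks of length `m`, block `κ` starts at `m * κ`,
so it is dominated termwise by `v (i κ)` whenever `i κ ≤ m * κ`. -/
theorem Antitone.sum_le_nsmul_sum_of_le_mul {α : Type*} [AddCommMonoid α] [PartialOrder α]
    [IsOrderedAddMonoid α] {k m : ℕ} {v : Fin (k * m) → α} (hv : Antitone v)
    {i : Fin k → Fin (k * m)} (hi : ∀ κ, (i κ : ℕ) ≤ m * κ) :
    ∑ j, v j ≤ m • ∑ κ, v (i κ) := by
  have hblock : ∀ κ r, v (finProdFinEquiv (κ, r)) ≤ v (i κ) := fun κ r =>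
    hv <| Fin.le_def.mpr <| (hi κ).trans (Nat.le_add_left _ r)
  calc ∑ j, v j = ∑ κ, ∑ r : Fin m, v (finProdFinEquiv (κ, r)) := by
        rw [← Equiv.sum_comp finProdFinEquiv v, Fintype.sum_prod_type]
    _ ≤ ∑ κ, ∑ _r : Fin m, v (i κ) := sum_le_sum fun κ _ => sum_le_sum fun r _ => hblock κ r
    _ = m • ∑ κ, v (i κ) := by simp only [sum_const, card_univ, Fintype.card_fin, smul_sum]

theorem stmt_7_general (n k : ℕ) (hk : 0 < k) (hdvd : k ∣ n)
    (v : Fin n → ℝ) (hmono : Antitone v)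
    (i : Fin k → Fin n)
    (h0 : (i ⟨0, hk⟩).val = 0)
    (hbound : ∀ κ : Fin k, 1 ≤ κ.val → (i κ).val ≤ (n / k) * κ.val) :
    (k : ℝ) / n * ∑ j, v j ≤ ∑ j, v (i j) := by
  obtain ⟨m, rfl⟩ := hdvd
  have hm : 0 < m := Nat.pos_of_mul_pos_left (i ⟨0, hk⟩).pos
  have hi : ∀ κ : Fin k, (i κ : ℕ) ≤ m * κ := by
    intro κ
    rcases Nat.eq_zero_or_pos κ.val with hκ | hκ
    · simp [show κ = ⟨0, hk⟩ from Fin.ext hκ, h0]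
    · simpa [Nat.mul_div_cancel_left m hk] using hbound κ hκ
  have hsum := hmono.sum_le_nsmul_sum_of_le_mul hi
  rw [nsmul_eq_mul] at hsum
  rw [Nat.cast_mul, div_mul_cancel_left₀ (by positivity), inv_mul_le_iff₀ (by positivity)]
  exact hsum

/-- Let `v_1 ≥ ... ≥ v_n ≥ 0` and `1 = i_1 < i_2 < ... < i_k ≤ n` with
`k ∣ n`. If `i_{κ+1} ≤ (n/k)κ + 1` for every `κ ∈ {1,...,k−1}`, then
`Σ_{j=1}^k v_{i_j} ≥ (k/n) Σ_{i=1}^n v_i`. (Indices are 0-based in Lean: the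
`(κ+1)`-th selected index `i κ` satisfies `(i κ).val ≤ (n/k)·κ`.) -/
theorem stmt_7 (n k : ℕ) (hk : 0 < k) (hn : 0 < n) (hdvd : k ∣ n)
    (v : Fin n → ℝ) (hmono : Antitone v) (hnonneg : ∀ j, 0 ≤ v j)
    (i : Fin k → Fin n) (hstrict : StrictMono i)
    (h0 : (i ⟨0, hk⟩).val = 0)
    (hbound : ∀ κ : Fin k, 1 ≤ κ.val → (i κ).val ≤ (n / k) * κ.val) :
    (k : ℝ) / n * ∑ j, v j ≤ ∑ j, v (i j) :=
  stmt_7_general n k hk hdvd v hmono i h0 hbound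
end

section
/- Let x_1, ..., x_n be points spanning a k-dimensional space, and v ∈ [0,1]^n a vector such that for every linearly independent subset B of size k, Σ_{i=1}^n v_i ≥ (n/k)Σ_{i∈B} v_i + 1, where k divides n. Assume v_1 ≥ ... ≥ v_n. Let B = {i_1 < ... < i_k} be the lexicographically greedy maximum-weight basis. Then there exists κ ∈ {1,...,k−1} with i_{κ+1} > (n/k)κ + 1, and consequently the points x_1, ..., x_{⌊(n/k)κ⌋+1} all lie in a κ-dimensional subspace. -/
/-!
Suppose every greedy index satisfies `i κ ≤ (n/k) κ`. Cut `{0, …, n-1}` into `k` consecutive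
blocks of length `n/k`; every index in block `κ` is at least `i κ`, so by monotonicity its weight
is at most `v (i κ)`. Hence `Σ_j v_j ≤ (n/k) Σ_κ v (i κ)`, which contradicts the hypothesis on the
basis `{i κ}`. For the resulting `κ`, greediness puts all points before `i κ` into the span of the
first `κ` chosen points.
-/

open Finset

theorem sum_le_nsmul_sum_of_antitone {α : Type*} [AddCommMonoid α] [PartialOrder α]
    [IsOrderedAddMonoid α] {n k q : ℕ} (hn : k * q = n) {v : Fin n → α} (hv : Antitone v)
    {i : Fin k → Fin n} (hi : ∀ κ, (i κ : ℕ) ≤ q * κ) :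
    ∑ j, v j ≤ q • ∑ κ, v (i κ) := by
  have hblock : ∀ p : Fin k × Fin q, v (finCongr hn (finProdFinEquiv p)) ≤ v (i p.1) := by
    intro p
    apply hv
    simp only [Fin.le_def, finCongr_apply, Fin.val_cast, finProdFinEquiv_apply_val]
    linarith [hi p.1]
  calc ∑ j, v j = ∑ p : Fin k × Fin q, v (finCongr hn (finProdFinEquiv p)) :=
        (Fintype.sum_equiv (finProdFinEquiv.trans (finCongr hn)) _ _ fun _ => rfl).symm
    _ ≤ ∑ p : Fin k × Fin q, v (i p.1) := sum_le_sum fun p _ => hblock p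
    _ = q • ∑ κ, v (i κ) := by
        simp only [Fintype.sum_prod_type, sum_const, card_univ, Fintype.card_fin, smul_sum]

theorem linearIndepOn_image_univ {R M ι ι' : Type*} [Ring R] [AddCommGroup M] [Module R M]
    [Fintype ι'] [DecidableEq ι] {x : ι → M} {i : ι' → ι} (h : LinearIndependent R (x ∘ i)) :
    LinearIndepOn R x (univ.image i : Finset ι) := by
  rw [coe_image, coe_univ]
  exact h.linearIndepOn_univ.image_of_comp i x

theorem finrank_span_image_Iio_le {R M : Type*} [Ring R] [StrongRankCondition R]
    [AddCommGroup M] [Module R M] {k : ℕ} (y : Fin k → M) (κ : Fin k) :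
    Module.finrank R (Submodule.span R {z | ∃ j : Fin k, j < κ ∧ z = y j}) ≤ κ := by
  classical
  have hset : {z | ∃ j : Fin k, j < κ ∧ z = y j} = ((Iio κ).image y : Finset M) := by
    ext z
    simp [eq_comm]
  rw [hset]
  calc _ ≤ ((Iio κ).image y).card := finrank_span_finset_le_card _
    _ ≤ (Iio κ).card := card_image_le
    _ = κ := Fin.card_Iio κ

theorem stmt_8_general {d n k : ℕ} (hk : 0 < k) (hdvd : k ∣ n)
    (x : Fin n → (Fin d → ℝ))
    (v : Fin n → ℝ) (hmono : Antitone v)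
    (hLP : ∀ B : Finset (Fin n), B.card = k →
      LinearIndependent ℝ (fun j : B => x j) →
      (n : ℝ) / k * ∑ j ∈ B, v j + 1 ≤ ∑ j, v j)
    (i : Fin k → Fin n) (hstrict : StrictMono i)
    (h0 : (i ⟨0, hk⟩).val = 0)
    (hindep : LinearIndependent ℝ (fun j => x (i j)))
    (hgreedy : ∀ κ : Fin k, ∀ m : Fin n, m < i κ →
      x m ∈ Submodule.span ℝ {y | ∃ j : Fin k, j < κ ∧ y = x (i j)}) :
    ∃ κ : Fin k, 1 ≤ κ.val ∧ (n / k) * κ.val < (i κ).val ∧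
      Module.finrank ℝ (Submodule.span ℝ {y | ∃ j : Fin k, j < κ ∧ y = x (i j)}) ≤ κ.val ∧
      ∀ m : Fin n, m.val ≤ (n / k) * κ.val →
        x m ∈ Submodule.span ℝ {y | ∃ j : Fin k, j < κ ∧ y = x (i j)} := by
  obtain ⟨κ, hκ1, hκ2⟩ : ∃ κ : Fin k, 1 ≤ κ.val ∧ n / k * κ.val < (i κ).val := by
    by_contra! hcon
    have hle : ∀ κ : Fin k, (i κ : ℕ) ≤ n / k * κ := fun κ => by
      rcases Nat.eq_zero_or_pos κ with h | h
      · rw [show κ = ⟨0, hk⟩ from Fin.ext h, h0]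
        exact Nat.zero_le _
      · exact hcon κ h
    have hsum := sum_le_nsmul_sum_of_antitone (Nat.mul_div_cancel' hdvd) hmono hle
    have hbasis := hLP _ (card_image_of_injective _ hstrict.injective ▸ card_fin k)
      (linearIndepOn_image_univ hindep)
    rw [sum_image fun a _ b _ h => hstrict.injective h,
      ← Nat.cast_div hdvd (by positivity)] at hbasis
    rw [nsmul_eq_mul] at hsum
    linarith
  exact ⟨κ, hκ1, hκ2, finrank_span_image_Iio_le _ κ, fun m hm => hgreedy κ m (by omega)⟩

/-- Let `x_1,...,x_n` span a `k`-dimensional space (`k ∣ n`), and let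
`v ∈ [0,1]^n` be nonincreasing with `Σ_i v_i ≥ (n/k) Σ_{i∈B'} v_i + 1` for every
linearly independent subset `B'` of size `k`. If `i : Fin k → Fin n` enumerates the
greedy maximum-weight basis (0-based; greedy: every point with index `< i κ` lies in
the span of the first `κ` chosen points), then there is `κ ∈ {1,...,k−1}` with
`i_{κ+1} > (n/k)κ + 1`, and the points `x_1,...,x_{(n/k)κ+1}` all lie in a
`κ`-dimensional subspace (the span of the first `κ` chosen points). -/
theorem stmt_8 {d n k : ℕ} (hk : 0 < k) (hn : 0 < n) (hdvd : k ∣ n)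
    (x : Fin n → (Fin d → ℝ))
    (hspan : Module.finrank ℝ (Submodule.span ℝ (Set.range x)) = k)
    (v : Fin n → ℝ) (h01 : ∀ j, v j ∈ Set.Icc (0 : ℝ) 1) (hmono : Antitone v)
    (hLP : ∀ B : Finset (Fin n), B.card = k →
      LinearIndependent ℝ (fun j : B => x j) →
      (n : ℝ) / k * ∑ j ∈ B, v j + 1 ≤ ∑ j, v j)
    (i : Fin k → Fin n) (hstrict : StrictMono i)
    (h0 : (i ⟨0, hk⟩).val = 0)
    (hindep : LinearIndependent ℝ (fun j => x (i j)))
    (hgreedy : ∀ κ : Fin k, ∀ m : Fin n, m < i κ →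
      x m ∈ Submodule.span ℝ {y | ∃ j : Fin k, j < κ ∧ y = x (i j)}) :
    ∃ κ : Fin k, 1 ≤ κ.val ∧ (n / k) * κ.val < (i κ).val ∧
      Module.finrank ℝ (Submodule.span ℝ {y | ∃ j : Fin k, j < κ ∧ y = x (i j)}) ≤ κ.val ∧
      ∀ m : Fin n, m.val ≤ (n / k) * κ.val →
        x m ∈ Submodule.span ℝ {y | ∃ j : Fin k, j < κ ∧ y = x (i j)} :=
  stmt_8_general hk hdvd x v hmono hLP i hstrict h0 hindep hgreedy
end
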